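/- arXiv:2005.09676 — 3 statements merged into one kernel-verified Lean document; each statement's English description precedes it below -/
import Mathlib

section
/- Let a, r ∈ ℝ with 0 ≤ r and 3r < a, and let S ⊆ ℝ be the union of the closed balls of radius r centered at a and at −a. Let f, g : ℝ → ℂ be Schwartz functions whose Fourier transforms 𝓕f and 𝓕g (with 𝓕h(k) = ∫_ℝ h(x) e^{−ikx} dx) vanish at every k ∉ S. Then the Fourier transform of the pointwise product f·g vanishes at every k ∈ S. -/
/-!
With the angular normalisation `∫ h x * exp (-i k x)`, the Fourier transform of a product
is `(2π)⁻¹` times the convolution of the Fourier transforms (Fourier inversion for `f`, then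
Fubini).
That convolution is supported in the sumset `S + S`, which misses `S` when `3 r < a`: the points
of `S + S` lie within `2 r` of `0` or `±2 a`, those of `S` within `r` of `±a`.
-/

open MeasureTheory FourierTransform Real
open scoped Convolution Pointwise

theorem fourier_mul_eq_integral {f g : ℝ → ℂ} (hf_cont : Continuous f) (hf : Integrable f)
    (hFf : Integrable (𝓕 f)) (hg : Integrable g) (w : ℝ) :
    𝓕 (f * g) w = ∫ ξ, 𝓕 f ξ * 𝓕 g (w - ξ) := by
  have hinv (x : ℝ) : f x = ∫ ξ, (𝐞 (ξ * x) : ℂ) * 𝓕 f ξ := by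
    conv_lhs => rw [← hf_cont.fourierInv_fourier_eq hf hFf, fourierInv_eq]
    simp [Circle.smul_def, mul_comm]
  have hint : Integrable (fun p : ℝ × ℝ ↦ (𝐞 (-(p.1 * (w - p.2))) : ℂ) * (g p.1 * 𝓕 f p.2))
      (volume.prod volume) :=
    (hg.mul_prod hFf).bdd_mul (by fun_prop) (c := 1)
      (.of_forall fun _ ↦ (Circle.norm_coe _).le)
  calc 𝓕 (f * g) w = ∫ x, ∫ ξ, (𝐞 (-(x * (w - ξ))) : ℂ) * (g x * 𝓕 f ξ) := by
        rw [fourier_real_eq]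
        congr 1 with x
        rw [Pi.mul_apply, hinv x, Circle.smul_def, smul_eq_mul, ← integral_mul_const,
          ← integral_const_mul]
        congr 1 with ξ
        rw [show -(x * (w - ξ)) = -(x * w) + ξ * x by ring, AddChar.map_add_eq_mul,
          Circle.coe_mul]
        ring
    _ = ∫ ξ, ∫ x, (𝐞 (-(x * (w - ξ))) : ℂ) * (g x * 𝓕 f ξ) := integral_integral_swap hint
    _ = ∫ ξ, 𝓕 f ξ * 𝓕 g (w - ξ) := by
        congr 1 with ξ
        rw [fourier_real_eq g, ← integral_const_mul]
        congr 1 with x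
        rw [Circle.smul_def, smul_eq_mul]
        ring

noncomputable def angularFourier (h : ℝ → ℂ) (k : ℝ) : ℂ :=
  ∫ x, h x * Complex.exp (-(Complex.I * k * x))

theorem angularFourier_eq_fourier (h : ℝ → ℂ) (k : ℝ) :
    angularFourier h k = 𝓕 h (k / (2 * π)) := by
  rw [fourier_real_eq_integral_exp_smul, angularFourier]
  congr 1 with x
  rw [smul_eq_mul, mul_comm]
  congr 2
  push_cast
  field_simp

open ContinuousLinearMap in
theorem angularFourier_mul {f g : ℝ → ℂ} (hf_cont : Continuous f) (hf : Integrable f)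
    (hFf : Integrable (𝓕 f)) (hg : Integrable g) (k : ℝ) :
    angularFourier (f * g) k =
      (2 * π)⁻¹ * (angularFourier f ⋆[mul ℂ ℂ] angularFourier g) k := by
  have hπ : 0 < 2 * π := by positivity
  rw [convolution_mul, angularFourier_eq_fourier, fourier_mul_eq_integral hf_cont hf hFf hg]
  simp only [angularFourier_eq_fourier, sub_div]
  rw [Measure.integral_comp_div (fun ξ ↦ 𝓕 f ξ * 𝓕 g (k / (2 * π) - ξ)), abs_of_pos hπ,
    Complex.real_smul, ← mul_assoc]
  push_cast
  field_simp

theorem disjoint_closedBall_union_add_self {a r : ℝ} (h : 3 * r < a) :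
    Disjoint (Metric.closedBall a r ∪ Metric.closedBall (-a) r)
      ((Metric.closedBall a r ∪ Metric.closedBall (-a) r) +
        (Metric.closedBall a r ∪ Metric.closedBall (-a) r)) := by
  rw [Set.disjoint_left]
  rintro k hk ⟨s, hs, t, ht, rfl⟩
  simp only [Set.mem_union, Metric.mem_closedBall, Real.dist_eq, abs_le] at hk hs ht
  rcases hk with hk | hk <;> rcases hs with hs | hs <;> rcases ht with ht | ht <;> linarith

theorem stmt8_general (a r : ℝ) (har : 3 * r < a)
    (S : Set ℝ) (hS : S = Metric.closedBall a r ∪ Metric.closedBall (-a) r)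
    (f g : SchwartzMap ℝ ℂ)
    (hf : ∀ k : ℝ, k ∉ S →
      (∫ x : ℝ, f x * Complex.exp (-(Complex.I * (k : ℂ) * (x : ℂ)))) = 0)
    (hg : ∀ k : ℝ, k ∉ S →
      (∫ x : ℝ, g x * Complex.exp (-(Complex.I * (k : ℂ) * (x : ℂ)))) = 0) :
    ∀ k ∈ S,
      (∫ x : ℝ, f x * g x * Complex.exp (-(Complex.I * (k : ℂ) * (x : ℂ)))) = 0 := by
  intro k hk
  have hsupp_f : Function.support (angularFourier f) ⊆ S := Function.support_subset_iff'.2 hf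
  have hsupp_g : Function.support (angularFourier g) ⊆ S := Function.support_subset_iff'.2 hg
  have hconv : (angularFourier f ⋆[ContinuousLinearMap.mul ℂ ℂ] angularFourier g) k = 0 := by
    refine Function.notMem_support.1 fun hk' ↦ ?_
    have hkSS : k ∈ S + S :=
      Set.add_subset_add hsupp_f hsupp_g (support_convolution_subset _ hk')
    exact (hS ▸ disjoint_closedBall_union_add_self har).notMem_of_mem_left hk hkSS
  show angularFourier (f * g) k = 0
  rw [angularFourier_mul f.continuous f.integrable (𝓕 f).integrable g.integrable, hconv, mul_zero]

theorem stmt8 (a r : ℝ) (hr : 0 ≤ r) (har : 3 * r < a)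
    (S : Set ℝ) (hS : S = Metric.closedBall a r ∪ Metric.closedBall (-a) r)
    (f g : SchwartzMap ℝ ℂ)
    (hf : ∀ k : ℝ, k ∉ S →
      (∫ x : ℝ, f x * Complex.exp (-(Complex.I * (k : ℂ) * (x : ℂ)))) = 0)
    (hg : ∀ k : ℝ, k ∉ S →
      (∫ x : ℝ, g x * Complex.exp (-(Complex.I * (k : ℂ) * (x : ℂ)))) = 0) :
    ∀ k ∈ S,
      (∫ x : ℝ, f x * g x * Complex.exp (-(Complex.I * (k : ℂ) * (x : ℂ)))) = 0 :=
  stmt8_general a r har S hS f g hf hg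
end

section
/- Let ε ∈ (0,1], M ≥ 0, and let A : ℝ → ℂ be four times continuously differentiable with |A'''(X)| ≤ M and |A''''(X)| ≤ M for all X ∈ ℝ. Set v(X) := 2 Re( A(X) e^{iX/ε} ). Then v is four times continuously differentiable and for every X ∈ ℝ, | −ε⁻²( v(X) + 2ε² v''(X) + ε⁴ v''''(X) ) − 2 Re( 4A''(X) e^{iX/ε} ) | ≤ 8εM + 2ε²M. -/
/-!
By Leibniz' rule the derivatives of `A x * exp (i x / ε)` are `((∂ + i/ε)ⁿ A) · exp (i x / ε)`.
Since `ε (∂ + i/ε) = ε∂ + i`, the conjugated operator is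
`-ε⁻² (1 + (ε∂ + i)²)² = -ε⁻² (ε∂)² (ε∂ + 2i)² = 4∂² - 4iε∂³ - ε²∂⁴`, so the residual is the
real part of `(-4iε A''' - ε² A'''') exp (i x / ε)`, bounded by the sup bounds on `A'''`, `A''''`.
-/

open Complex Finset

theorem ContinuousLinearMap.iteratedDeriv_comp_left {𝕜 F G : Type*} [NontriviallyNormedField 𝕜]
    [NormedAddCommGroup F] [NormedSpace 𝕜 F] [NormedAddCommGroup G] [NormedSpace 𝕜 G]
    (g : F →L[𝕜] G) {f : 𝕜 → F} {x : 𝕜} {n : WithTop ℕ∞} (hf : ContDiffAt 𝕜 n f x) {i : ℕ}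
    (hi : i ≤ n) : iteratedDeriv i (g ∘ f) x = g (iteratedDeriv i f x) := by
  simp [iteratedDeriv_eq_iteratedFDeriv, g.iteratedFDeriv_comp_left hf hi]

theorem iteratedDeriv_const_mul_re {f : ℝ → ℂ} {x : ℝ} {n : WithTop ℕ∞} (hf : ContDiffAt ℝ n f x)
    {i : ℕ} (hi : i ≤ n) (a : ℝ) :
    iteratedDeriv i (fun x => a * (f x).re) x = a * (iteratedDeriv i f x).re :=
  (a • reCLM).iteratedDeriv_comp_left hf hi

theorem contDiff_cexp_const_mul_ofReal {n : WithTop ℕ∞} (c : ℂ) :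
    ContDiff ℝ n fun x : ℝ => exp (c * x) :=
  (contDiff_const.mul ofRealCLM.contDiff).cexp

theorem iteratedDeriv_cexp_const_mul_ofReal (n : ℕ) (c : ℂ) :
    iteratedDeriv n (fun x : ℝ => exp (c * x)) = fun x : ℝ => c ^ n * exp (c * x) := by
  induction n with
  | zero => simp
  | succ n ih =>
    ext x
    rw [iteratedDeriv_succ, ih]
    have h := (((hasDerivAt_id x).ofReal_comp.const_mul c).cexp).const_mul (c ^ n)
    simpa [pow_succ, mul_comm, mul_left_comm, mul_assoc] using h.deriv

theorem iteratedDeriv_mul_cexp_const_mul {f : ℝ → ℂ} {x : ℝ} {n : ℕ} (hf : ContDiffAt ℝ n f x)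
    (c : ℂ) : iteratedDeriv n (fun x : ℝ => f x * exp (c * x)) x =
      (∑ i ∈ range (n + 1), n.choose i * c ^ (n - i) * iteratedDeriv i f x) * exp (c * x) := by
  simp only [iteratedDeriv_fun_mul hf (contDiff_cexp_const_mul_ofReal c).contDiffAt,
    iteratedDeriv_cexp_const_mul_ofReal, sum_mul]
  exact sum_congr rfl fun i _ => by ring

theorem swiftHohenberg_mul_cexp {A : ℝ → ℂ} {X ε : ℝ} (hA : ContDiffAt ℝ 4 A X) (hε : ε ≠ 0) :
    -((ε : ℂ) ^ 2)⁻¹ * (A X * exp (I / ε * X)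
        + 2 * ε ^ 2 * iteratedDeriv 2 (fun x : ℝ => A x * exp (I / ε * x)) X
        + ε ^ 4 * iteratedDeriv 4 (fun x : ℝ => A x * exp (I / ε * x)) X) =
      (4 * iteratedDeriv 2 A X - 4 * I * ε * iteratedDeriv 3 A X - ε ^ 2 * iteratedDeriv 4 A X) *
        exp (I / ε * X) := by
  have hε' : (ε : ℂ) ≠ 0 := by exact_mod_cast hε
  rw [iteratedDeriv_mul_cexp_const_mul (hA.of_le (by norm_num)),
    iteratedDeriv_mul_cexp_const_mul hA]
  simp only [sum_range_succ, sum_range_zero, Nat.choose, iteratedDeriv_zero, Nat.reduceSub,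
    div_pow, I_sq, I_pow_three, I_pow_four]
  field_simp
  ring

theorem norm_neg_four_I_mul_sub_sq_mul_le {ε M : ℝ} (hε : 0 ≤ ε) {a₃ a₄ : ℂ} (h₃ : ‖a₃‖ ≤ M)
    (h₄ : ‖a₄‖ ≤ M) : ‖-(4 * I * ε * a₃) - ε ^ 2 * a₄‖ ≤ 4 * ε * M + ε ^ 2 * M :=
  calc ‖-(4 * I * ε * a₃) - ε ^ 2 * a₄‖ ≤ ‖4 * I * ε * a₃‖ + ‖(ε : ℂ) ^ 2 * a₄‖ := by
        rw [← norm_neg (4 * I * _ * _)]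
        exact norm_sub_le _ _
    _ = 4 * ε * ‖a₃‖ + ε ^ 2 * ‖a₄‖ := by simp [abs_of_nonneg hε]
    _ ≤ 4 * ε * M + ε ^ 2 * M := by gcongr

theorem stmt10_general (ε M : ℝ) (hε : 0 < ε)
    (A : ℝ → ℂ) (hA : ContDiff ℝ 4 A)
    (hA3 : ∀ X : ℝ, ‖iteratedDeriv 3 A X‖ ≤ M)
    (hA4 : ∀ X : ℝ, ‖iteratedDeriv 4 A X‖ ≤ M)
    (v : ℝ → ℝ)
    (hv : v = fun X : ℝ => 2 * (A X * Complex.exp (Complex.I * (X : ℂ) / (ε : ℂ))).re) :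
    ContDiff ℝ 4 v ∧
    ∀ X : ℝ,
      |(-(ε ^ 2)⁻¹ * (v X + 2 * ε ^ 2 * iteratedDeriv 2 v X + ε ^ 4 * iteratedDeriv 4 v X))
          - 2 * (4 * iteratedDeriv 2 A X * Complex.exp (Complex.I * (X : ℂ) / (ε : ℂ))).re| ≤
        8 * ε * M + 2 * ε ^ 2 * M := by
  have hexp (X : ℝ) : exp (I * X / ε) = exp (I / ε * X) := by ring_nf
  set u : ℝ → ℂ := fun x => A x * exp (I / ε * x)
  have hvu : v = fun X => 2 * (u X).re := by simp only [hv, hexp, u]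
  have hu : ContDiff ℝ 4 u := hA.mul (contDiff_cexp_const_mul_ofReal _)
  refine ⟨hvu ▸ contDiff_const.mul (reCLM.contDiff.comp hu), fun X => ?_⟩
  have hv_iter (i : ℕ) (hi : i ≤ 4) : iteratedDeriv i v X = 2 * (iteratedDeriv i u X).re :=
    hvu ▸ iteratedDeriv_const_mul_re hu.contDiffAt (by exact_mod_cast hi) 2
  set e := exp (I / ε * X)
  have hlhs : -(ε ^ 2)⁻¹ * (v X + 2 * ε ^ 2 * iteratedDeriv 2 v X + ε ^ 4 * iteratedDeriv 4 v X)
      - 2 * (4 * iteratedDeriv 2 A X * exp (I * X / ε)).re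
      = 2 * ((-(4 * I * ε * iteratedDeriv 3 A X) - ε ^ 2 * iteratedDeriv 4 A X) * e).re := by
    rw [hv_iter 2 (by norm_num), hv_iter 4 (by norm_num), hvu, hexp]
    simp only [← re_ofReal_mul, ← add_re, ← sub_re]
    congr 1
    push_cast
    linear_combination 2 * swiftHohenberg_mul_cexp hA.contDiffAt (X := X) hε.ne'
  rw [hlhs]
  calc |2 * ((-(4 * I * ε * iteratedDeriv 3 A X) - ε ^ 2 * iteratedDeriv 4 A X) * e).re|
      ≤ 2 * ‖(-(4 * I * ε * iteratedDeriv 3 A X) - ε ^ 2 * iteratedDeriv 4 A X) * e‖ := by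
        rw [abs_mul, abs_two]
        gcongr
        exact abs_re_le_norm _
    _ ≤ 2 * (4 * ε * M + ε ^ 2 * M) := by
        rw [norm_mul, show ‖e‖ = 1 by simp [e, norm_exp], mul_one]
        gcongr
        exact norm_neg_four_I_mul_sub_sq_mul_le hε.le (hA3 X) (hA4 X)
    _ = 8 * ε * M + 2 * ε ^ 2 * M := by ring

theorem stmt10 (ε M : ℝ) (hε : 0 < ε) (hε1 : ε ≤ 1) (hM : 0 ≤ M)
    (A : ℝ → ℂ) (hA : ContDiff ℝ 4 A)
    (hA3 : ∀ X : ℝ, ‖iteratedDeriv 3 A X‖ ≤ M)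
    (hA4 : ∀ X : ℝ, ‖iteratedDeriv 4 A X‖ ≤ M)
    (v : ℝ → ℝ)
    (hv : v = fun X : ℝ => 2 * (A X * Complex.exp (Complex.I * (X : ℂ) / (ε : ℂ))).re) :
    ContDiff ℝ 4 v ∧
    ∀ X : ℝ,
      |(-(ε ^ 2)⁻¹ * (v X + 2 * ε ^ 2 * iteratedDeriv 2 v X + ε ^ 4 * iteratedDeriv 4 v X))
          - 2 * (4 * iteratedDeriv 2 A X * Complex.exp (Complex.I * (X : ℂ) / (ε : ℂ))).re| ≤
        8 * ε * M + 2 * ε ^ 2 * M :=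
  stmt10_general ε M hε A hA hA3 hA4 v hv
end

section
/- Let ε > 0, T ≥ 0, and k ∈ ℝ with |εk − 1| ≤ 1, and set ℓ := k − 1/ε. Then | exp( −T ε⁻² (1 − ε²k²)² ) − exp( −4Tℓ² ) | ≤ 5 ε T |ℓ|³ exp( −Tℓ² ). -/
/-!
Writing `ℓ = k - 1/ε`, the Swift–Hohenberg exponent is `T ℓ² (2 + εℓ)²`, and on `|εℓ| ≤ 1` the
factor `(2 + εℓ)²` lies within `5|εℓ|` of `4` and is at least `1`. Both exponents are therefore
at least `T ℓ²`, and since `exp (-·)` is `exp (-c)`-Lipschitz on `[c, ∞)` the two semigroup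
symbols differ by at most `T ℓ² · 5 |εℓ| · exp (-T ℓ²)`.
-/

open Real

lemma exp_neg_sub_exp_neg_le_of_le {a b c : ℝ} (hca : c ≤ a) (hab : a ≤ b) :
    exp (-a) - exp (-b) ≤ (b - a) * exp (-c) :=
  calc exp (-a) - exp (-b) = exp (-a) * (1 - exp (-(b - a))) := by
        rw [mul_sub, ← exp_add]; ring_nf
    _ ≤ exp (-a) * (b - a) :=
        mul_le_mul_of_nonneg_left (by linarith [one_sub_le_exp_neg (b - a)]) (exp_pos _).le
    _ = (b - a) * exp (-a) := mul_comm _ _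
    _ ≤ (b - a) * exp (-c) := by gcongr

lemma abs_exp_neg_sub_exp_neg_le {a b c : ℝ} (hca : c ≤ a) (hcb : c ≤ b) :
    |exp (-a) - exp (-b)| ≤ |a - b| * exp (-c) := by
  rcases le_total a b with hab | hba
  · rw [abs_of_nonneg (sub_nonneg.2 (exp_le_exp.2 (neg_le_neg hab))), abs_sub_comm,
      abs_of_nonneg (sub_nonneg.2 hab)]
    exact exp_neg_sub_exp_neg_le_of_le hca hab
  · rw [abs_sub_comm, abs_of_nonneg (sub_nonneg.2 (exp_le_exp.2 (neg_le_neg hba))),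
      abs_of_nonneg (sub_nonneg.2 hba)]
    exact exp_neg_sub_exp_neg_le_of_le hcb hba

lemma swiftHohenberg_symbol_eq {ε : ℝ} (hε : ε ≠ 0) (k : ℝ) :
    (ε ^ 2)⁻¹ * (1 - ε ^ 2 * k ^ 2) ^ 2 = (k - 1 / ε) ^ 2 * (2 + ε * (k - 1 / ε)) ^ 2 := by
  field_simp
  ring

lemma one_le_two_add_sq {x : ℝ} (hx : -1 ≤ x) : 1 ≤ (2 + x) ^ 2 := by
  nlinarith

lemma abs_two_add_sq_sub_four_le {x : ℝ} (hx : |x| ≤ 1) : |(2 + x) ^ 2 - 4| ≤ 5 * |x| :=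
  calc |(2 + x) ^ 2 - 4| = |x| * |4 + x| := by rw [← abs_mul]; ring_nf
    _ ≤ |x| * 5 := by
        gcongr
        rw [abs_le] at hx ⊢
        constructor <;> linarith
    _ = 5 * |x| := mul_comm _ _

theorem stmt11 (ε T k : ℝ) (hε : 0 < ε) (hT : 0 ≤ T) (hk : |ε * k - 1| ≤ 1)
    (ℓ : ℝ) (hℓ : ℓ = k - 1 / ε) :
    |Real.exp (-(T * (ε ^ 2)⁻¹ * (1 - ε ^ 2 * k ^ 2) ^ 2)) - Real.exp (-(4 * T * ℓ ^ 2))| ≤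
      5 * ε * T * |ℓ| ^ 3 * Real.exp (-(T * ℓ ^ 2)) := by
  have hεℓ : |ε * ℓ| ≤ 1 := by rwa [hℓ, mul_sub, mul_one_div_cancel hε.ne']
  have hsymbol : T * (ε ^ 2)⁻¹ * (1 - ε ^ 2 * k ^ 2) ^ 2 = T * ℓ ^ 2 * (2 + ε * ℓ) ^ 2 := by
    rw [mul_assoc, swiftHohenberg_symbol_eq hε.ne', ← hℓ, mul_assoc]
  have hTℓ : 0 ≤ T * ℓ ^ 2 := by positivity
  have hlower : T * ℓ ^ 2 ≤ T * ℓ ^ 2 * (2 + ε * ℓ) ^ 2 :=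
    le_mul_of_one_le_right hTℓ (one_le_two_add_sq (abs_le.1 hεℓ).1)
  rw [hsymbol]
  refine (abs_exp_neg_sub_exp_neg_le hlower (by linarith)).trans ?_
  gcongr
  calc |T * ℓ ^ 2 * (2 + ε * ℓ) ^ 2 - 4 * T * ℓ ^ 2|
      = |T * ℓ ^ 2 * ((2 + ε * ℓ) ^ 2 - 4)| := by ring_nf
    _ = T * ℓ ^ 2 * |(2 + ε * ℓ) ^ 2 - 4| := by rw [abs_mul, abs_of_nonneg hTℓ]
    _ ≤ T * ℓ ^ 2 * (5 * |ε * ℓ|) := by gcongr; exact abs_two_add_sq_sub_four_le hεℓ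
    _ = 5 * ε * T * |ℓ| ^ 3 := by rw [abs_mul, abs_of_pos hε, ← sq_abs ℓ]; ring
end
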